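/- arXiv:2101.09769 — 2 statements merged into one kernel-verified Lean document; each statement's English description precedes it below -/
import Mathlib

section
/- Let (Ω, B, μ) be a probability space and {N^j} an increasing sequence of finite measurable partitions of Ω. Let W be a finite set, S a collection of subsets of W, and for each e ∈ S let f_e : Ω^e → [0,1] be measurable with respect to the product σ-algebra (Ω,N^σ)^e, where N^σ = σ(⋃_j N^j). Suppose x_W ∈ Ω^W is such that for each e ∈ S, x_e is a point of density of f_e with f^+_e(x_e) > 0, where f^+_e is the a.e. limit of the partition averages over products ∏_{w∈e} N^j(x_w). Then t_S({f_e}) = ∫ ∏_{e∈S} f_e(y_e) dμ^W(y_W) > 0. -/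
/-!
The box averages of `f e` over `nbox N e j y` are the conditional expectations of `f e` given the
finite σ-algebras generated by these boxes, so Lévy's upward theorem makes them converge a.e. to
`f e`; hence `f e = fplus e` a.e., and the density hypothesis says that the averages of
`|f e - fplus e x|` over the boxes around `x` tend to `0`. Under the product measure a function of
the `e`-coordinates has the same average over the box around `x` on `U = ⋃ S` as over the
`e`-box, and `∏ c ≤ ∏ a + ∑ |a - c|` for numbers in `[0, 1]`. Therefore
`t_S ≥ μ(B) (∏ fplus e x - ∑ ⨍ |f e - fplus e x|)` on the level-`J` box `B` around `x`, which is
positive for `J` large: `μ(B) > 0` because the averages at `x` tend to `fplus e x > 0`.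
-/

open MeasureTheory Filter

/-- The box (product neighborhood) around the e-coordinates of a tuple x determined by
the level-j partition cells N j (x w). -/
def nbox {Ω W : Type*} (N : ℕ → Ω → Set Ω) (e : Finset W) (j : ℕ) (x : W → Ω) :
    Set (W → Ω) :=
  {y | ∀ w ∈ e, y w ∈ N j (x w)}

open Set Function Topology MeasurableSpace ProbabilityTheory

section SetAverage

variable {α : Type*} [MeasurableSpace α] {μ : Measure α}

theorem setIntegral_div_measure_eq_setAverage (f : α → ℝ) (s : Set α) :
    (∫ x in s, f x ∂μ) / (μ s).toReal = ⨍ x in s, f x ∂μ := by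
  rw [setAverage_eq, smul_eq_mul, measureReal_def, div_eq_inv_mul]

theorem measure_ne_zero_of_tendsto_setAverage {A : ℕ → Set α} (hA : Antitone A)
    {g : α → ℝ} {c : ℝ} (hc : c ≠ 0)
    (h : Tendsto (fun j => ⨍ x in A j, g x ∂μ) atTop (𝓝 c)) (j : ℕ) : μ (A j) ≠ 0 := by
  intro h0
  have hzero : ∀ᶠ k in atTop, 0 = ⨍ x in A k, g x ∂μ := by
    filter_upwards [eventually_ge_atTop j] with k hk
    rw [Measure.restrict_eq_zero.2 (measure_mono_null (hA hk) h0), average_zero_measure]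
  exact hc (tendsto_nhds_unique h (tendsto_const_nhds.congr' hzero))

theorem norm_setAverage_le [IsFiniteMeasure μ] {C : ℝ} (hC : 0 ≤ C) {f : α → ℝ}
    (hf : ∀ x, ‖f x‖ ≤ C) (s : Set α) : ‖⨍ x in s, f x ∂μ‖ ≤ C := by
  rw [setAverage_eq, norm_smul, norm_inv, Real.norm_of_nonneg measureReal_nonneg]
  rcases eq_or_ne (μ.real s) 0 with h0 | h0
  · simpa [h0] using hC
  calc (μ.real s)⁻¹ * ‖∫ x in s, f x ∂μ‖ ≤ (μ.real s)⁻¹ * (C * μ.real s) :=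
        mul_le_mul_of_nonneg_left
          (norm_setIntegral_le_of_norm_le_const (measure_lt_top _ _) fun x _ => hf x)
          (inv_nonneg.2 measureReal_nonneg)
    _ = C := by field_simp

end SetAverage

theorem Finset.prod_le_prod_add_sum_abs_sub {ι : Type*} (s : Finset ι) {a c : ι → ℝ}
    (ha : ∀ i ∈ s, a i ∈ Set.Icc 0 1) (hc : ∀ i ∈ s, c i ∈ Set.Icc 0 1) :
    ∏ i ∈ s, c i ≤ ∏ i ∈ s, a i + ∑ i ∈ s, |a i - c i| := by
  classical
  induction s using Finset.induction_on with
  | empty => simp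
  | insert i s hi ih =>
    rw [prod_insert hi, prod_insert hi, sum_insert hi]
    have ih := ih (fun j hj => ha j (mem_insert_of_mem hj))
      fun j hj => hc j (mem_insert_of_mem hj)
    obtain ⟨ha0, ha1⟩ := ha i (mem_insert_self i s)
    obtain ⟨hc0, hc1⟩ := hc i (mem_insert_self i s)
    have hA0 : 0 ≤ ∏ j ∈ s, a j := prod_nonneg fun j hj => (ha j (mem_insert_of_mem hj)).1
    have hA1 : ∏ j ∈ s, a j ≤ 1 := prod_le_one (fun j hj => (ha j (mem_insert_of_mem hj)).1)
      fun j hj => (ha j (mem_insert_of_mem hj)).2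
    have hsum : 0 ≤ ∑ j ∈ s, |a j - c j| := sum_nonneg fun j _ => abs_nonneg _
    have hci : c i - a i ≤ |a i - c i| := by rw [abs_sub_comm]; exact le_abs_self _
    nlinarith [mul_le_mul_of_nonneg_left ih hc0, mul_le_of_le_one_left hsum hc1,
      mul_le_mul_of_nonneg_right hci hA0, mul_le_of_le_one_right (abs_nonneg (a i - c i)) hA1]

section DependsOn

variable {ι : Type*} {X : ι → Type*}

theorem DependsOn.comp_updateFinset [DecidableEq ι] {β : Type*} {f : (Π i, X i) → β}
    {s : Finset ι} (hf : DependsOn f s) (x₀ : Π i, X i) :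
    (f ∘ Function.updateFinset x₀ s) ∘ (fun x (i : s) => x i) = f :=
  funext fun _ => hf fun i hi => by simp [Function.updateFinset_def, Finset.mem_coe.1 hi]

theorem DependsOn.indicator_pi {β : Type*} [Zero β] {f : (Π i, X i) → β} {s : Set ι}
    (hf : DependsOn f s) (t : ∀ i, Set (X i)) : DependsOn ((s.pi t).indicator f) s := by
  intro x y h
  have hxy : x ∈ s.pi t ↔ y ∈ s.pi t := by
    simp only [Set.mem_pi]
    exact forall₂_congr fun i hi => by rw [h i hi]
  by_cases hx : x ∈ s.pi t
  · rw [indicator_of_mem hx, indicator_of_mem (hxy.1 hx), hf h]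
  · rw [indicator_of_notMem hx, indicator_of_notMem (hxy.not.1 hx)]

variable [Fintype ι] [DecidableEq ι] [∀ i, MeasurableSpace (X i)]
  {μ : ∀ i, Measure (X i)} [∀ i, IsProbabilityMeasure (μ i)]

theorem integral_mul_of_dependsOn_of_disjoint {f g : (Π i, X i) → ℝ} {s t : Finset ι}
    (hst : Disjoint s t) (hf : Measurable f) (hg : Measurable g)
    (hfs : DependsOn f s) (hgt : DependsOn g t) :
    ∫ x, f x * g x ∂Measure.pi μ = (∫ x, f x ∂Measure.pi μ) * ∫ x, g x ∂Measure.pi μ := by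
  have (i : ι) : Nonempty (X i) := nonempty_of_isProbabilityMeasure (μ i)
  obtain ⟨x₀⟩ : Nonempty (Π i, X i) := inferInstance
  have hcoord := (iIndepFun_pi (X := fun _ => id) (μ := μ)
    fun _ => aemeasurable_id).indepFun_finset s t hst fun i => measurable_pi_apply i
  have hfg := hcoord.comp (hf.comp (measurable_updateFinset (x := x₀)))
    (hg.comp (measurable_updateFinset (x := x₀)))
  simp only [id] at hfg
  rw [hfs.comp_updateFinset x₀, hgt.comp_updateFinset x₀] at hfg
  exact hfg.integral_fun_mul_eq_mul_integral hf.aestronglyMeasurable hg.aestronglyMeasurable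

theorem setIntegral_pi_eq_measureReal_mul_setAverage {g : (Π i, X i) → ℝ} {e s : Finset ι}
    (hes : e ⊆ s) {t : ∀ i, Set (X i)} (ht : ∀ i, MeasurableSet (t i)) (hg : Measurable g)
    (hge : DependsOn g e) :
    ∫ x in (s : Set ι).pi t, g x ∂Measure.pi μ
      = (Measure.pi μ).real ((s : Set ι).pi t)
          * ⨍ x in (e : Set ι).pi t, g x ∂Measure.pi μ := by
  set A := (e : Set ι).pi t
  set C := ((s \ e : Finset ι) : Set ι).pi t
  have hpi (r : Finset ι) : MeasurableSet ((r : Set ι).pi t) :=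
    .pi r.countable_toSet fun i _ => ht i
  have hAC : (s : Set ι).pi t = A ∩ C := by
    rw [← Set.union_pi, ← Finset.coe_union, Finset.union_sdiff_of_subset hes]
  have hsplit (x : Π i, X i) : (A ∩ C).indicator g x = A.indicator g x * C.indicator 1 x := by
    by_cases hA : x ∈ A <;> by_cases hC : x ∈ C <;>
      simp only [← Set.indicator_indicator, indicator_of_mem, indicator_of_notMem, hA, hC,
        Pi.one_apply, mul_one, mul_zero, not_false_eq_true]
  have hmeasure : (Measure.pi μ).real ((s : Set ι).pi t)
      = (Measure.pi μ).real A * (Measure.pi μ).real C := by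
    simp only [A, C, measureReal_def, Measure.pi_pi_finset, ← ENNReal.toReal_mul,
      mul_comm (∏ i ∈ e, _), Finset.prod_sdiff hes]
  rw [← integral_indicator (hpi s), hAC, integral_congr_ae (Eventually.of_forall hsplit),
    integral_mul_of_dependsOn_of_disjoint Finset.disjoint_sdiff (hg.indicator (hpi e))
      (measurable_one.indicator (hpi _)) (hge.indicator_pi t)
      (((dependsOn_const 1).mono (empty_subset _)).indicator_pi t),
    integral_indicator (hpi e), integral_indicator_one (hpi _), ← hAC, hmeasure,
    ← measure_smul_setAverage _ (measure_ne_top _ _), smul_eq_mul]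
  ring

theorem measureReal_mul_sub_sum_setAverage_le_integral_prod (S : Finset (Finset ι))
    {f : Finset ι → (Π i, X i) → ℝ} (hf01 : ∀ e ∈ S, ∀ x, f e x ∈ Set.Icc 0 1)
    (hfm : ∀ e ∈ S, Measurable (f e)) (hfe : ∀ e ∈ S, DependsOn (f e) e)
    {c : Finset ι → ℝ} (hc : ∀ e ∈ S, c e ∈ Set.Icc 0 1)
    {t : ∀ i, Set (X i)} (ht : ∀ i, MeasurableSet (t i)) :
    (Measure.pi μ).real (((S.sup id : Finset ι) : Set ι).pi t)
        * (∏ e ∈ S, c e - ∑ e ∈ S, ⨍ x in (e : Set ι).pi t, |f e x - c e| ∂Measure.pi μ)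
      ≤ ∫ x, ∏ e ∈ S, f e x ∂Measure.pi μ := by
  set B := ((S.sup id : Finset ι) : Set ι).pi t
  have hB : MeasurableSet B := .pi (Finset.countable_toSet _) fun i _ => ht i
  have hdev (e) (he : e ∈ S) : Integrable (fun x => |f e x - c e|) (Measure.pi μ) :=
    .of_mem_Icc 0 1 ((hfm e he).sub_const _).abs.aemeasurable <| .of_forall fun x =>
      ⟨abs_nonneg _, abs_sub_le_of_nonneg_of_le (hf01 e he x).1 (hf01 e he x).2 (hc e he).1
        (hc e he).2⟩
  have hprod : Integrable (fun x => ∏ e ∈ S, f e x) (Measure.pi μ) :=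
    .of_mem_Icc 0 1 (Finset.measurable_prod S hfm).aemeasurable <| .of_forall fun x =>
      ⟨Finset.prod_nonneg fun e he => (hf01 e he x).1,
        Finset.prod_le_one (fun e he => (hf01 e he x).1) fun e he => (hf01 e he x).2⟩
  have hterm (e) (he : e ∈ S) : ∫ x in B, |f e x - c e| ∂Measure.pi μ
      = (Measure.pi μ).real B * ⨍ x in (e : Set ι).pi t, |f e x - c e| ∂Measure.pi μ :=
    setIntegral_pi_eq_measureReal_mul_setAverage (Finset.le_sup (f := id) he) ht
      ((hfm e he).sub_const _).abs fun x y h => by simp only [hfe e he h]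
  calc _ = ∫ x in B, (∏ e ∈ S, c e - ∑ e ∈ S, |f e x - c e|) ∂Measure.pi μ := by
        rw [integral_sub (integrable_const _)
            (integrable_finsetSum S fun e he => (hdev e he).integrableOn),
          setIntegral_const, integral_finsetSum S fun e he => (hdev e he).integrableOn,
          Finset.sum_congr rfl hterm, ← Finset.mul_sum, smul_eq_mul, mul_sub]
    _ ≤ ∫ x in B, ∏ e ∈ S, f e x ∂Measure.pi μ :=
        setIntegral_mono_on ((integrable_const _).sub
            (integrable_finsetSum S fun e he => (hdev e he).integrableOn))
          hprod.integrableOn hB fun x _ => by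
            linarith [Finset.prod_le_prod_add_sum_abs_sub S (fun e he => hf01 e he x) hc]
    _ ≤ ∫ x, ∏ e ∈ S, f e x ∂Measure.pi μ :=
        setIntegral_le_integral hprod <| .of_forall fun x =>
          Finset.prod_nonneg fun e he => (hf01 e he x).1

end DependsOn

structure IsPartitionMap {α : Type*} (P : α → Set α) : Prop where
  mem_self (a : α) : a ∈ P a
  eq_of_mem {a b : α} : b ∈ P a → P b = P a

namespace IsPartitionMap

variable {α : Type*} {P : α → Set α}

theorem subset_of_measurableSet (hP : IsPartitionMap P) {s : Set α}
    (hs : MeasurableSet[generateFrom (range P)] s) {a : α} (ha : a ∈ s) : P a ⊆ s := by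
  induction s, hs using generateFrom_induction generalizing a with
  | hC t ht =>
    obtain ⟨b, rfl⟩ := ht
    exact (hP.eq_of_mem ha).subset
  | empty => exact absurd ha (notMem_empty a)
  | compl t _ ht =>
    intro b hb hbt
    exact ha (ht hbt (hP.eq_of_mem hb ▸ hP.mem_self a))
  | iUnion s _ hs =>
    obtain ⟨n, hn⟩ := mem_iUnion.1 ha
    exact (hs n hn).trans (subset_iUnion s n)

theorem measurableSet_of_subset (hP : IsPartitionMap P) (hc : (range P).Countable) {s : Set α}
    (hs : ∀ a ∈ s, P a ⊆ s) : MeasurableSet[generateFrom (range P)] s := by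
  have : s = ⋃ c ∈ {c ∈ range P | c ⊆ s}, c := by
    refine Subset.antisymm (fun a ha => ?_) (iUnion₂_subset fun c hc => hc.2)
    exact mem_biUnion ⟨mem_range_self a, hs a ha⟩ (hP.mem_self a)
  rw [this]
  exact .biUnion (hc.mono (sep_subset _ _)) fun c hc => measurableSet_generateFrom hc.1

theorem measurable_comp (hP : IsPartitionMap P) (hc : (range P).Countable) {β : Type*}
    [MeasurableSpace β] (Θ : Set α → β) :
    Measurable[generateFrom (range P)] (fun a => Θ (P a)) :=
  fun _ _ => hP.measurableSet_of_subset hc fun a ha b hb => by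
    simpa only [mem_preimage, hP.eq_of_mem hb] using ha

variable [MeasurableSpace α] {μ : Measure α} [IsFiniteMeasure μ]

theorem setIntegral_setAverage (hP : IsPartitionMap P) (hmeas : ∀ a, MeasurableSet (P a))
    (F : α → ℝ) (a : α) :
    ∫ b in P a, ⨍ c in P b, F c ∂μ ∂μ = ∫ b in P a, F b ∂μ := by
  rw [setIntegral_congr_fun (hmeas a) fun b hb => by rw [hP.eq_of_mem hb], setIntegral_const,
    measure_smul_setAverage _ (measure_ne_top _ _)]

theorem setAverage_ae_eq_condExp (hP : IsPartitionMap P) (hc : (range P).Countable)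
    (hmeas : ∀ a, MeasurableSet (P a)) {F : α → ℝ} (hF : Integrable F μ) {C : ℝ}
    (hFC : ∀ a, ‖F a‖ ≤ C) :
    (fun a => ⨍ b in P a, F b ∂μ) =ᵐ[μ] μ[F | generateFrom (range P)] := by
  have hle : generateFrom (range P) ≤ ‹_› := generateFrom_le <| by
    rintro _ ⟨a, rfl⟩
    exact hmeas a
  have hmeasAvg := hP.measurable_comp hc fun c => ⨍ b in c, F b ∂μ
  have hint : Integrable (fun a => ⨍ b in P a, F b ∂μ) μ :=
    .of_bound (hmeasAvg.mono hle le_rfl).aestronglyMeasurable C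
      (.of_forall fun a => norm_setAverage_le ((norm_nonneg _).trans (hFC a)) hFC _)
  refine ae_eq_condExp_of_forall_setIntegral_eq hle hF (fun _ _ _ => hint.integrableOn)
    (fun s hs _ => ?_) hmeasAvg.aestronglyMeasurable
  have : Countable {c ∈ range P | c ⊆ s} := (hc.mono (sep_subset _ _)).to_subtype
  have hs_eq : s = ⋃ c : {c ∈ range P | c ⊆ s}, (c : Set α) := by
    refine Subset.antisymm (fun a ha => mem_iUnion.2 ?_) (iUnion_subset fun c => c.2.2)
    exact ⟨⟨P a, mem_range_self a, hP.subset_of_measurableSet hs ha⟩, hP.mem_self a⟩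
  have hdisj : Pairwise (Disjoint on fun c : {c ∈ range P | c ⊆ s} => (c : Set α)) := by
    refine (pairwise_subtype_iff_pairwise_set _ (Disjoint on id)).2 ?_
    rintro _ ⟨⟨a, rfl⟩, -⟩ _ ⟨⟨b, rfl⟩, -⟩ hab
    refine disjoint_left.2 fun z hza hzb => hab ?_
    rw [← hP.eq_of_mem hza, ← hP.eq_of_mem hzb]
  have hcm : ∀ c : {c ∈ range P | c ⊆ s}, MeasurableSet (c : Set α) := by
    rintro ⟨_, ⟨a, rfl⟩, -⟩
    exact hmeas a
  rw [hs_eq, integral_iUnion hcm hdisj hint.integrableOn,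
    integral_iUnion hcm hdisj hF.integrableOn]
  refine tsum_congr ?_
  rintro ⟨_, ⟨a, rfl⟩, -⟩
  exact hP.setIntegral_setAverage hmeas F a

theorem tendsto_setAverage_ae {P : ℕ → α → Set α} (hP : ∀ j, IsPartitionMap (P j))
    (hc : ∀ j, (range (P j)).Countable) (hmeas : ∀ j a, MeasurableSet (P j a))
    (hanti : ∀ a, Antitone fun j => P j a) {F : α → ℝ} (hF : Integrable F μ) {C : ℝ}
    (hFC : ∀ a, ‖F a‖ ≤ C) (hFm : Measurable[⨆ j, generateFrom (range (P j))] F) :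
    ∀ᵐ a ∂μ, Tendsto (fun j => ⨍ b in P j a, F b ∂μ) atTop (𝓝 (F a)) := by
  let ℱ : Filtration ℕ ‹MeasurableSpace α› :=
    { seq := fun j => generateFrom (range (P j))
      mono' := monotone_nat_of_le_succ fun j => generateFrom_le <| by
        rintro _ ⟨a, rfl⟩
        refine (hP (j + 1)).measurableSet_of_subset (hc (j + 1)) fun b hb => ?_
        exact (hanti b (Nat.le_succ j)).trans ((hP j).eq_of_mem hb).subset
      le' := fun j => generateFrom_le <| by
        rintro _ ⟨a, rfl⟩
        exact hmeas j a }
  have hcondExp : ∀ᵐ a ∂μ, ∀ j, ⨍ b in P j a, F b ∂μ = μ[F | ℱ j] a :=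
    ae_all_iff.2 fun j => (hP j).setAverage_ae_eq_condExp (hc j) (hmeas j) hF hFC
  filter_upwards [hF.tendsto_ae_condExp (ℱ := ℱ) hFm.stronglyMeasurable, hcondExp] with a ha hj
  simpa only [hj] using ha

end IsPartitionMap

section nbox

variable {Ω W : Type*} {N : ℕ → Ω → Set Ω} {j : ℕ}

theorem IsPartitionMap.nbox (hN : IsPartitionMap (N j)) (e : Finset W) :
    IsPartitionMap (nbox N e j) where
  mem_self x w _ := hN.mem_self (x w)
  eq_of_mem h := by
    ext z
    exact forall₂_congr fun w hw => by rw [hN.eq_of_mem (h w hw)]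

theorem finite_range_nbox [Finite W] (hfin : (range (N j)).Finite) (e : Finset W) :
    (range (nbox N e j)).Finite := by
  refine ((Set.Finite.pi fun _ => hfin).image
    fun κ : W → Set Ω => {y | ∀ w ∈ e, y w ∈ κ w}).subset ?_
  rintro _ ⟨x, rfl⟩
  exact ⟨fun w => N j (x w), fun w _ => mem_range_self _, rfl⟩

theorem antitone_nbox (href : ∀ j x, N (j + 1) x ⊆ N j x) (e : Finset W) (x : W → Ω) :
    Antitone fun j => nbox N e j x :=
  antitone_nat_of_succ_le fun j _ hy w hw => href j _ (hy w hw)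

theorem measurable_iSup_generateFrom_range_nbox [Finite W] [Nonempty Ω]
    (hN : ∀ j, IsPartitionMap (N j)) (hfin : ∀ j, (range (N j)).Finite) {e : Finset W}
    {F : (W → Ω) → ℝ}
    (hF : Measurable[@MeasurableSpace.pi W (fun _ => Ω)
      (fun _ => generateFrom {s : Set Ω | ∃ j x, s = N j x})] F)
    (hFe : DependsOn F e) :
    Measurable[⨆ j, generateFrom (range (nbox N e j))] F := by
  classical
  obtain ⟨ω⟩ := ‹Nonempty Ω›
  let φ : (W → Ω) → (W → Ω) := fun y w => if w ∈ e then y w else ω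
  have hφ : Measurable[⨆ j, generateFrom (range (nbox N e j)),
      @MeasurableSpace.pi W (fun _ => Ω) (fun _ => generateFrom {s | ∃ j x, s = N j x})] φ := by
    refine @measurable_pi_lambda (W → Ω) W (fun _ => Ω)
      (⨆ j, generateFrom (range (nbox N e j))) (fun _ => generateFrom {s | ∃ j x, s = N j x}) φ
      fun w => ?_
    by_cases hw : w ∈ e
    · simp only [φ, hw, if_true]
      refine @measurable_generateFrom _ _ (⨆ j, generateFrom (range (nbox N e j))) _ _ ?_
      rintro _ ⟨j, x, rfl⟩
      refine le_iSup (fun j => generateFrom (range (nbox N e j))) j _ ?_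
      refine ((hN j).nbox e).measurableSet_of_subset (finite_range_nbox (hfin j) e).countable
        fun y hy z hz => ?_
      exact ((hN j).eq_of_mem hy) ▸ hz w hw
    · simp only [φ, hw, if_false]
      exact measurable_const
  have hFφ : F ∘ φ = F := funext fun y => hFe fun w hw => by simp [φ, Finset.mem_coe.1 hw]
  exact hFφ ▸ hF.comp hφ

variable [MeasurableSpace Ω]

theorem measurable_of_measurable_pi_generateFrom {C : Set (Set Ω)}
    (hC : ∀ s ∈ C, MeasurableSet s) {F : (W → Ω) → ℝ}
    (hF : Measurable[@MeasurableSpace.pi W (fun _ => Ω) (fun _ => generateFrom C)] F) :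
    Measurable F :=
  hF.mono (iSup_mono fun _ => comap_mono (generateFrom_le hC)) le_rfl

theorem measurableSet_nbox (hmeas : ∀ x, MeasurableSet (N j x)) (e : Finset W) (x : W → Ω) :
    MeasurableSet (nbox N e j x) :=
  .pi e.countable_toSet fun w _ => hmeas (x w)

theorem measure_nbox [Fintype W] (μ : Measure Ω) [IsProbabilityMeasure μ] (e : Finset W)
    (x : W → Ω) : Measure.pi (fun _ : W => μ) (nbox N e j x) = ∏ w ∈ e, μ (N j (x w)) :=
  Measure.pi_pi_finset _ _ _

theorem measureReal_nbox_sup_pos [Fintype W] [DecidableEq W] (μ : Measure Ω)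
    [IsProbabilityMeasure μ] {S : Finset (Finset W)} {x : W → Ω}
    (hS : ∀ e ∈ S, Measure.pi (fun _ : W => μ) (nbox N e j x) ≠ 0) :
    0 < (Measure.pi fun _ : W => μ).real (nbox N (S.sup id) j x) := by
  refine ENNReal.toReal_pos ?_ (measure_ne_top _ _)
  simp only [measure_nbox, Finset.prod_ne_zero_iff] at hS ⊢
  intro w hw
  obtain ⟨e, he, hwe⟩ := Finset.mem_sup.1 hw
  exact hS e he w hwe

theorem tendsto_setAverage_nbox_ae [Fintype W] (μ : Measure Ω) [IsProbabilityMeasure μ]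
    (hN : ∀ j, IsPartitionMap (N j)) (hmeasN : ∀ j x, MeasurableSet (N j x))
    (hfin : ∀ j, (range (N j)).Finite) (href : ∀ j x, N (j + 1) x ⊆ N j x) {e : Finset W}
    {F : (W → Ω) → ℝ} {C : ℝ} (hFC : ∀ y, ‖F y‖ ≤ C)
    (hF : Measurable[@MeasurableSpace.pi W (fun _ => Ω)
      (fun _ => generateFrom {s : Set Ω | ∃ j x, s = N j x})] F)
    (hFe : DependsOn F e) :
    ∀ᵐ y ∂Measure.pi (fun _ : W => μ),
      Tendsto (fun j => ⨍ z in nbox N e j y, F z ∂Measure.pi fun _ : W => μ) atTop (𝓝 (F y)) :=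
  have : Nonempty Ω := nonempty_of_isProbabilityMeasure μ
  have hFm : Measurable F := measurable_of_measurable_pi_generateFrom (by
    rintro _ ⟨j, y, rfl⟩
    exact hmeasN j y) hF
  IsPartitionMap.tendsto_setAverage_ae (fun j => (hN j).nbox e)
    (fun j => (finite_range_nbox (hfin j) e).countable)
    (fun j => measurableSet_nbox (hmeasN j) e)
    (antitone_nbox href e) (.of_bound hFm.aestronglyMeasurable C (.of_forall hFC)) hFC
    (measurable_iSup_generateFrom_range_nbox hN hfin hF hFe)

end nbox

theorem stmt_11_general
    {Ω : Type*} [MeasurableSpace Ω] (μ : Measure Ω) [IsProbabilityMeasure μ]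
    (N : ℕ → Ω → Set Ω)
    (hmem : ∀ j x, x ∈ N j x)
    (hmeasN : ∀ j x, MeasurableSet (N j x))
    (hcell : ∀ j x y, y ∈ N j x → N j y = N j x)
    (hfin : ∀ j, (Set.range (N j)).Finite)
    (href : ∀ j x, N (j + 1) x ⊆ N j x)
    {W : Type*} [Fintype W]
    (S : Finset (Finset W))
    (f fplus : Finset W → (W → Ω) → ℝ)
    (h01 : ∀ e ∈ S, ∀ x, f e x ∈ Set.Icc (0 : ℝ) 1)
    (hdep : ∀ e ∈ S, ∀ x y : W → Ω, (∀ w ∈ e, x w = y w) → f e x = f e y)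
    (hmeasf : ∀ e ∈ S,
      Measurable[@MeasurableSpace.pi W (fun _ => Ω)
        (fun _ => MeasurableSpace.generateFrom {s : Set Ω | ∃ j x, s = N j x})] (f e))
    -- fplus e is the a.e. limit of the partition averages of f e over the boxes
    (hlim : ∀ e ∈ S, ∀ᵐ y ∂(Measure.pi fun _ : W => μ),
      Tendsto
        (fun j => (∫ z in nbox N e j y, f e z ∂(Measure.pi fun _ : W => μ))
          / ((Measure.pi fun _ : W => μ) (nbox N e j y)).toReal)
        atTop (nhds (fplus e y)))
    (x : W → Ω)
    -- the limit density exists at x and is positive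
    (hlimx : ∀ e ∈ S,
      Tendsto
        (fun j => (∫ z in nbox N e j x, f e z ∂(Measure.pi fun _ : W => μ))
          / ((Measure.pi fun _ : W => μ) (nbox N e j x)).toReal)
        atTop (nhds (fplus e x)))
    (hposx : ∀ e ∈ S, 0 < fplus e x)
    -- x_e is a point of density of f_e
    (hdens : ∀ e ∈ S,
      Tendsto
        (fun j => (∫ z in nbox N e j x, |fplus e z - fplus e x|
            ∂(Measure.pi fun _ : W => μ))
          / ((Measure.pi fun _ : W => μ) (nbox N e j x)).toReal)
        atTop (nhds 0)) :
    0 < ∫ y, ∏ e ∈ S, f e y ∂(Measure.pi fun _ : W => μ) := by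
  classical
  simp only [setIntegral_div_measure_eq_setAverage] at hlim hlimx hdens
  have hN (j : ℕ) : IsPartitionMap (N j) := ⟨hmem j, hcell j _ _⟩
  have hfm (e) (he : e ∈ S) : Measurable (f e) :=
    measurable_of_measurable_pi_generateFrom (by
      rintro _ ⟨j, y, rfl⟩
      exact hmeasN j y) (hmeasf e he)
  have hfe (e) (he : e ∈ S) : DependsOn (f e) e := fun y z h => hdep e he y z h
  have hf1 (e) (he : e ∈ S) (y : W → Ω) : ‖f e y‖ ≤ 1 := by
    rw [Real.norm_of_nonneg (h01 e he y).1]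
    exact (h01 e he y).2
  have hae (e) (he : e ∈ S) : f e =ᵐ[Measure.pi fun _ : W => μ] fplus e := by
    filter_upwards [tendsto_setAverage_nbox_ae μ hN hmeasN hfin href (hf1 e he) (hmeasf e he)
      (hfe e he), hlim e he] with y h₁ h₂
    exact tendsto_nhds_unique h₁ h₂
  have hc (e) (he : e ∈ S) : fplus e x ∈ Set.Icc 0 1 :=
    ⟨(hposx e he).le, le_of_tendsto' (hlimx e he) fun j =>
      (abs_le.1 (norm_setAverage_le zero_le_one (hf1 e he) _)).2⟩
  have hdev : Tendsto (fun j => ∑ e ∈ S, ⨍ z in nbox N e j x, |f e z - fplus e x|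
      ∂(Measure.pi fun _ : W => μ)) atTop (𝓝 0) := by
    simpa using tendsto_finsetSum S fun e he => (hdens e he).congr fun j =>
      setAverage_congr_fun (measurableSet_nbox (hmeasN j) e x)
        ((hae e he).mono fun z hz _ => by rw [hz])
  obtain ⟨J, hJ⟩ :=
    (hdev.eventually (gt_mem_nhds (Finset.prod_pos fun e he => hposx e he))).exists
  have hbox := measureReal_nbox_sup_pos μ fun e he =>
    measure_ne_zero_of_tendsto_setAverage (antitone_nbox href e x) (hposx e he).ne'
      (hlimx e he) J
  exact (mul_pos hbox (sub_pos.2 hJ)).trans_le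
    (measureReal_mul_sub_sum_setAverage_le_integral_prod S h01 hfm hfe hc
      fun w => hmeasN J (x w))

/-- The measure-theoretic graph counting lemma: if each f_e is measurable with respect
to the product of the σ-algebra generated by the partition cells, and x_W is a tuple
such that each x_e is a positive point of density of f_e (for the box neighborhoods),
then t_S({f_e}) > 0. -/
theorem stmt_11
    {Ω : Type*} [MeasurableSpace Ω] (μ : Measure Ω) [IsProbabilityMeasure μ]
    (N : ℕ → Ω → Set Ω)
    (hmem : ∀ j x, x ∈ N j x)
    (hmeasN : ∀ j x, MeasurableSet (N j x))
    (hcell : ∀ j x y, y ∈ N j x → N j y = N j x)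
    (hfin : ∀ j, (Set.range (N j)).Finite)
    (href : ∀ j x, N (j + 1) x ⊆ N j x)
    {W : Type*} [Fintype W] [DecidableEq W]
    (S : Finset (Finset W))
    (f fplus : Finset W → (W → Ω) → ℝ)
    (h01 : ∀ e ∈ S, ∀ x, f e x ∈ Set.Icc (0 : ℝ) 1)
    (hdep : ∀ e ∈ S, ∀ x y : W → Ω, (∀ w ∈ e, x w = y w) → f e x = f e y)
    (hmeasf : ∀ e ∈ S,
      Measurable[@MeasurableSpace.pi W (fun _ => Ω)
        (fun _ => MeasurableSpace.generateFrom {s : Set Ω | ∃ j x, s = N j x})] (f e))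
    -- fplus e is the a.e. limit of the partition averages of f e over the boxes
    (hlim : ∀ e ∈ S, ∀ᵐ y ∂(Measure.pi fun _ : W => μ),
      Tendsto
        (fun j => (∫ z in nbox N e j y, f e z ∂(Measure.pi fun _ : W => μ))
          / ((Measure.pi fun _ : W => μ) (nbox N e j y)).toReal)
        atTop (nhds (fplus e y)))
    (x : W → Ω)
    -- the limit density exists at x and is positive
    (hlimx : ∀ e ∈ S,
      Tendsto
        (fun j => (∫ z in nbox N e j x, f e z ∂(Measure.pi fun _ : W => μ))
          / ((Measure.pi fun _ : W => μ) (nbox N e j x)).toReal)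
        atTop (nhds (fplus e x)))
    (hposx : ∀ e ∈ S, 0 < fplus e x)
    -- x_e is a point of density of f_e
    (hdens : ∀ e ∈ S,
      Tendsto
        (fun j => (∫ z in nbox N e j x, |fplus e z - fplus e x|
            ∂(Measure.pi fun _ : W => μ))
          / ((Measure.pi fun _ : W => μ) (nbox N e j x)).toReal)
        atTop (nhds 0)) :
    0 < ∫ y, ∏ e ∈ S, f e y ∂(Measure.pi fun _ : W => μ) :=
  stmt_11_general μ N hmem hmeasN hcell hfin href S f fplus h01 hdep hmeasf hlim x hlimx hposx hdens
end

section
/- Let (Ω, B, μ) be a probability space, {N^j} an increasing sequence of finite measurable partitions generating N^σ, and f : Ω → [0,1] measurable. For any α < β and ε > 0, there exists j₀ such that μ({x : E(f|N^σ)(x) ≤ α and sup_{j ≥ j₀} f^j(x) ≥ β}) < ε, where f^j(x) is the average of f over N^j(x). -/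
/-!
The partition averages `f^j` are versions of `E(f | σ(N^j))`, so by Lévy's upward theorem they
converge a.e. to `g = E(f | N^σ)`. By Egorov's theorem the convergence is uniform off a set of
measure `< ε`, and once `|f^j - g| < β - α` there, `g ≤ α` and `f^j ≥ β` cannot both hold.
-/

open MeasureTheory Filter MeasurableSpace Set Topology

/-- `P x` is the cell containing `x` of a partition of `Ω`. -/
structure IsCellMap {Ω : Type*} (P : Ω → Set Ω) : Prop where
  mem_self (x : Ω) : x ∈ P x
  eq_of_mem {x y : Ω} : y ∈ P x → P y = P x

namespace IsCellMap

variable {Ω : Type*} {P Q : Ω → Set Ω} {s : Set Ω}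

theorem subset_of_measurableSet_generateFrom (hP : IsCellMap P)
    (hs : MeasurableSet[generateFrom (range P)] s) : ∀ x ∈ s, P x ⊆ s := by
  induction s, hs using generateFrom_induction with
  | hC t ht =>
    obtain ⟨z, rfl⟩ := ht
    intro x hx
    rw [hP.eq_of_mem hx]
  | empty => simp
  | compl t _ ih =>
    intro x hx y hy hyt
    exact hx (ih y hyt (by rw [hP.eq_of_mem hy]; exact hP.mem_self x))
  | iUnion t _ ih =>
    intro x hx
    obtain ⟨n, hn⟩ := mem_iUnion.1 hx
    exact (ih n x hn).trans (subset_iUnion t n)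

theorem measurableSet_generateFrom_range_of_forall_subset (hP : IsCellMap P)
    (hc : (range P).Countable) (hs : ∀ x ∈ s, P x ⊆ s) :
    MeasurableSet[generateFrom (range P)] s := by
  have hunion : s = ⋃₀ (P '' s) := by
    refine subset_antisymm (fun x hx => ⟨P x, mem_image_of_mem P hx, hP.mem_self x⟩) ?_
    rintro y ⟨_, ⟨x, hx, rfl⟩, hy⟩
    exact hs x hx hy
  rw [hunion]
  refine .sUnion (hc.mono (image_subset_range P s)) ?_
  rintro _ ⟨x, -, rfl⟩
  exact measurableSet_generateFrom ⟨x, rfl⟩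

theorem apply_eq_of_mem {β : Type*} [MeasurableSpace β] [MeasurableSingletonClass β]
    (hP : IsCellMap P) {g : Ω → β} (hg : Measurable[generateFrom (range P)] g)
    {x y : Ω} (hy : y ∈ P x) : g y = g x :=
  hP.subset_of_measurableSet_generateFrom (hg (measurableSet_singleton (g x))) x rfl hy

theorem generateFrom_range_mono (hP : IsCellMap P) (hQ : IsCellMap Q)
    (hc : (range Q).Countable) (hQP : ∀ x, Q x ⊆ P x) :
    generateFrom (range P) ≤ generateFrom (range Q) := by
  refine generateFrom_le ?_
  rintro _ ⟨x, rfl⟩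
  refine hQ.measurableSet_generateFrom_range_of_forall_subset hc fun y hy => ?_
  rw [← hP.eq_of_mem hy]
  exact hQP y

theorem ae_measure_ne_zero [MeasurableSpace Ω] {μ : Measure Ω} (hP : IsCellMap P)
    (hc : (range P).Countable) : ∀ᵐ x ∂μ, μ (P x) ≠ 0 := by
  have hnull : μ (⋃₀ (range P ∩ {c | μ c = 0})) = 0 :=
    (measure_sUnion_null_iff (hc.mono inter_subset_left)).2 fun _ hnull => hnull.2
  rw [ae_iff]
  simp only [ne_eq, not_not]
  refine measure_mono_null (fun x (hx : μ (P x) = 0) => ?_) hnull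
  exact ⟨P x, ⟨⟨x, rfl⟩, hx⟩, hP.mem_self x⟩

variable [m0 : MeasurableSpace Ω] {μ : Measure Ω} [IsFiniteMeasure μ]

theorem condExp_ae_eq_setAverage (hP : IsCellMap P) (hc : (range P).Countable)
    (hmeas : ∀ x, MeasurableSet (P x)) {f : Ω → ℝ} (hf : Integrable f μ) :
    μ[f | generateFrom (range P)] =ᵐ[μ] fun x => ⨍ y in P x, f y ∂μ := by
  have hle : generateFrom (range P) ≤ m0 :=
    generateFrom_le (by rintro _ ⟨x, rfl⟩; exact hmeas x)
  filter_upwards [hP.ae_measure_ne_zero hc] with x hx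
  have hconst : EqOn (μ[f | generateFrom (range P)]) (fun _ => μ[f | generateFrom (range P)] x)
      (P x) := fun y hy => hP.apply_eq_of_mem stronglyMeasurable_condExp.measurable hy
  calc μ[f | generateFrom (range P)] x
      = ⨍ _ in P x, μ[f | generateFrom (range P)] x ∂μ :=
        (setAverage_const hx (measure_ne_top μ _) _).symm
    _ = ⨍ y in P x, μ[f | generateFrom (range P)] y ∂μ := by
        rw [setAverage_eq, setAverage_eq, setIntegral_congr_fun (hmeas x) hconst]
    _ = ⨍ y in P x, f y ∂μ := by
        rw [setAverage_eq, setAverage_eq,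
          setIntegral_condExp hle hf (measurableSet_generateFrom ⟨x, rfl⟩)]

end IsCellMap

section Convergence

variable {Ω : Type*} [m0 : MeasurableSpace Ω] {μ : Measure Ω} [IsFiniteMeasure μ]

theorem ae_tendsto_setAverage_cell {N : ℕ → Ω → Set Ω} (hN : ∀ j, IsCellMap (N j))
    (hc : ∀ j, (range (N j)).Countable) (hmeas : ∀ j x, MeasurableSet (N j x))
    (hrefine : ∀ j x, N (j + 1) x ⊆ N j x) {f : Ω → ℝ} (hf : Integrable f μ) :
    ∀ᵐ x ∂μ, Tendsto (fun j => ⨍ y in N j x, f y ∂μ) atTop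
      (𝓝 (μ[f | ⨆ j, generateFrom (range (N j))] x)) := by
  let ℱ : Filtration ℕ m0 :=
    { seq := fun j => generateFrom (range (N j))
      mono' := monotone_nat_of_le_succ fun j =>
        (hN j).generateFrom_range_mono (hN (j + 1)) (hc (j + 1)) (hrefine j)
      le' := fun j => generateFrom_le (by rintro _ ⟨x, rfl⟩; exact hmeas j x) }
  have hcell : ∀ᵐ x ∂μ, ∀ j, μ[f | ℱ j] x = ⨍ y in N j x, f y ∂μ :=
    ae_all_iff.2 fun j => (hN j).condExp_ae_eq_setAverage (hc j) (hmeas j) hf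
  filter_upwards [tendsto_ae_condExp (ℱ := ℱ) f, hcell] with x hx hxcell
  exact hx.congr hxcell

theorem exists_measure_setOf_le_and_exists_ge_lt {u : ℕ → Ω → ℝ} {g : Ω → ℝ}
    (hu : ∀ j, AEStronglyMeasurable (u j) μ) (hg : AEStronglyMeasurable g μ)
    (hlim : ∀ᵐ x ∂μ, Tendsto (fun j => u j x) atTop (𝓝 (g x)))
    {α β ε : ℝ} (hαβ : α < β) (hε : 0 < ε) :
    ∃ j₀, μ {x | g x ≤ α ∧ ∃ j ≥ j₀, β ≤ u j x} < ENNReal.ofReal ε := by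
  have hversions : ∀ᵐ x ∂μ, g x = hg.mk g x ∧ ∀ j, u j x = (hu j).mk (u j) x :=
    hg.ae_eq_mk.and (ae_all_iff.2 fun j => (hu j).ae_eq_mk)
  have hlim' : ∀ᵐ x ∂μ, Tendsto (fun j => (hu j).mk (u j) x) atTop (𝓝 (hg.mk g x)) := by
    filter_upwards [hlim, hversions] with x hx ⟨hgx, hux⟩
    rw [← hgx]
    exact hx.congr hux
  obtain ⟨t, -, hμt, hunif⟩ := tendstoUniformlyOn_of_ae_tendsto'
    (fun j => (hu j).stronglyMeasurable_mk) hg.stronglyMeasurable_mk hlim' (half_pos hε)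
  obtain ⟨j₀, hj₀⟩ :=
    eventually_atTop.1 (Metric.tendstoUniformlyOn_iff.1 hunif _ (sub_pos.2 hαβ))
  refine ⟨j₀, (measure_mono_ae ?_).trans_lt
    (hμt.trans_lt ((ENNReal.ofReal_lt_ofReal_iff hε).2 (half_lt_self hε)))⟩
  filter_upwards [hversions] with x ⟨hgx, hux⟩ ⟨hxα, j, hj, hβx⟩
  by_contra hxt
  have hclose := hj₀ j hj x hxt
  rw [← hgx, ← hux, Real.dist_eq, abs_lt] at hclose
  linarith [hclose.1]

end Convergence

/-- The key quantitative step in the a.e. convergence of partition averages: for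
α < β and ε > 0 there is a j₀ so that the set of points where the conditional
expectation is ≤ α but some partition average at a level j ≥ j₀ is ≥ β has measure
less than ε. -/
theorem stmt_19
    {Ω : Type*} [MeasurableSpace Ω] (μ : Measure Ω) [IsProbabilityMeasure μ]
    (N : ℕ → Ω → Set Ω)
    (hmem : ∀ j x, x ∈ N j x)
    (hmeasN : ∀ j x, MeasurableSet (N j x))
    (hcell : ∀ j x y, y ∈ N j x → N j y = N j x)
    (hfin : ∀ j, (Set.range (N j)).Finite)
    (href : ∀ j x, N (j + 1) x ⊆ N j x)
    (f : Ω → ℝ) (hf : Measurable f) (hf01 : ∀ x, f x ∈ Set.Icc (0 : ℝ) 1) :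
    ∀ α β ε : ℝ, α < β → 0 < ε →
      ∃ j₀ : ℕ,
        μ {x : Ω |
            (μ[f|MeasurableSpace.generateFrom {s : Set Ω | ∃ j x, s = N j x}]) x ≤ α
            ∧ ∃ j ≥ j₀, β ≤ (∫ y in N j x, f y ∂μ) / (μ (N j x)).toReal}
          < ENNReal.ofReal ε := by
  intro α β ε hαβ hε
  have hN : ∀ j, IsCellMap (N j) := fun j => ⟨hmem j, hcell j _ _⟩
  have hc : ∀ j, (range (N j)).Countable := fun j => (hfin j).countable
  have hfint : Integrable f μ := .of_mem_Icc 0 1 hf.aemeasurable (ae_of_all _ hf01)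
  have hsup : ⨆ j, generateFrom (range (N j)) = generateFrom {s | ∃ j x, s = N j x} := by
    rw [iSup_generateFrom]
    congr 1
    ext s
    simp only [mem_iUnion, mem_range, mem_ofPred_eq, eq_comm]
  have hlim := ae_tendsto_setAverage_cell hN hc hmeasN href hfint
  rw [hsup] at hlim
  have havg : ∀ j, AEStronglyMeasurable (fun x => ⨍ y in N j x, f y ∂μ) μ := fun j =>
    integrable_condExp.aestronglyMeasurable.congr
      ((hN j).condExp_ae_eq_setAverage (hc j) (hmeasN j) hfint)
  obtain ⟨j₀, hj₀⟩ := exists_measure_setOf_le_and_exists_ge_lt havg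
    integrable_condExp.aestronglyMeasurable hlim hαβ hε
  refine ⟨j₀, lt_of_le_of_lt (measure_mono fun x hx => ?_) hj₀⟩
  simpa only [setAverage_eq, smul_eq_mul, inv_mul_eq_div, measureReal_def] using hx
end
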